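/- arXiv:1411.5035 — 5 statements merged into one kernel-verified Lean document; each statement's English description precedes it below -/
import Mathlib

section
/- Stabilized commutator identity in a monoidal category (proof of Proposition 2.7): let 𝒞 be a monoidal category, X an object, and u, v : X ≅ X isomorphisms. Then in the group Aut((X ⊗ X) ⊗ X) of automorphisms of (X ⊗ X) ⊗ X one has the identity (⁅u,v⁆ ⊗ 𝟙_X) ⊗ 𝟙_X = ⁅(u ⊗ u⁻¹) ⊗ 𝟙_X, (v ⊗ 𝟙_X) ⊗ v⁻¹⁆, where ⁅a,b⁆ = a·b·a⁻¹·b⁻¹ denotes the commutator (with respect to composition of isomorphisms) and ⁅u,v⁆ is computed in Aut(X) with the same convention. -/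
/-!
By the interchange law, `(f, g) ↦ f ⊗ g` is a group homomorphism `Aut X × Aut Y →* Aut (X ⊗ Y)`.
Hence the commutator of `(u ⊗ u⁻¹) ⊗ 1` and `(v ⊗ 1) ⊗ v⁻¹` is the image of the componentwise
commutator `(⁅u, v⁆, ⁅u⁻¹, 1⁆, ⁅1, v⁻¹⁆) = (⁅u, v⁆, 1, 1)` in `(Aut X × Aut X) × Aut X`.
-/

open CategoryTheory MonoidalCategory
open scoped commutatorElement

theorem Prod.commutatorElement_mk {G H : Type*} [Group G] [Group H] (g₁ g₂ : G) (h₁ h₂ : H) :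
    ⁅(g₁, h₁), (g₂, h₂)⁆ = (⁅g₁, g₂⁆, ⁅h₁, h₂⁆) :=
  rfl

namespace CategoryTheory.Aut

variable {C : Type*} [Category C] [MonoidalCategory C]

def tensorMonoidHom (X Y : C) : Aut X × Aut Y →* Aut (X ⊗ Y) where
  toFun f := f.1 ⊗ᵢ f.2
  map_one' := Aut.ext (id_tensorHom_id X Y)
  map_mul' f g := Aut.ext (tensorHom_comp_tensorHom g.1.hom g.2.hom f.1.hom f.2.hom).symm

end CategoryTheory.Aut

/-- **Stabilized commutator identity in a monoidal category**: for `u, v : X ≅ X` one has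
`(⁅u,v⁆ ⊗ 𝟙) ⊗ 𝟙 = ⁅(u ⊗ u⁻¹) ⊗ 𝟙, (v ⊗ 𝟙) ⊗ v⁻¹⁆` in the group `Aut ((X ⊗ X) ⊗ X)`,
where `⁅a,b⁆ = a·b·a⁻¹·b⁻¹` and the inverse `u⁻¹` in the group `Aut X` is `Iso.symm u`. -/
theorem stabilized_commutator {𝒞 : Type*} [Category 𝒞] [MonoidalCategory 𝒞]
    (X : 𝒞) (u v : Aut X) (a b c : Aut ((X ⊗ X) ⊗ X))
    (ha : a = (u ⊗ᵢ Iso.symm u) ⊗ᵢ Iso.refl X)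
    (hb : b = (v ⊗ᵢ Iso.refl X) ⊗ᵢ Iso.symm v)
    (hc : c = ((⁅u, v⁆ : Aut X) ⊗ᵢ Iso.refl X) ⊗ᵢ Iso.refl X) :
    c = ⁅a, b⁆ := by
  let T : (Aut X × Aut X) × Aut X →* Aut ((X ⊗ X) ⊗ X) :=
    (Aut.tensorMonoidHom (X ⊗ X) X).comp ((Aut.tensorMonoidHom X X).prodMap (MonoidHom.id _))
  calc c = T ((⁅u, v⁆, 1), 1) := hc
    _ = T ⁅(((u, u⁻¹), 1) : (Aut X × Aut X) × Aut X), ((v, 1), v⁻¹)⁆ := by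
      simp only [Prod.commutatorElement_mk, commutatorElement_one_left,
        commutatorElement_one_right]
    _ = ⁅a, b⁆ := by rw [map_commutatorElement, ha, hb]; rfl
end

section
/- Stably, commutators are commutators of commutators (essence of Proposition 2.7): let 𝒞 be a symmetric monoidal category, X an object, and u, v : X ≅ X isomorphisms. Then there exist automorphisms a, b ∈ Aut((X ⊗ X) ⊗ X), each of which is itself a commutator of elements of Aut((X ⊗ X) ⊗ X), such that (⁅u,v⁆ ⊗ 𝟙_X) ⊗ 𝟙_X = ⁅a,b⁆ in Aut((X ⊗ X) ⊗ X). -/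
open CategoryTheory MonoidalCategory
open scoped commutatorElement

/-!
Take `a = u ⊗ u⁻¹ ⊗ 1` and `b = v ⊗ 1 ⊗ v⁻¹`; factorwise, `⁅a, b⁆ = ⁅u, v⁆ ⊗ ⁅u⁻¹, 1⁆ ⊗ ⁅1, v⁻¹⁆`.
For a permutation `σ` of the tensor factors built from the braiding, `⁅g, σ⁆ = g (σ g σ⁻¹)⁻¹`,
and conjugating `u ⊗ 1 ⊗ 1` by `σ` moves `u` to another factor; the transposition of the first two
factors exhibits `a` as a commutator, the cyclic permutation does so for `b`.
-/

theorem commutatorElement_eq_mul_inv_of_mul_eq {G : Type*} [Group G] {g g' h : G}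
    (hg : h * g = g' * h) : ⁅g, h⁆ = g * g'⁻¹ := by
  rw [commutatorElement_def, eq_mul_inv_iff_mul_eq.mpr hg.symm]
  group

section

variable {𝒞 : Type*} [Category 𝒞]

@[simp]
theorem Aut.one_hom (X : 𝒞) : (1 : Aut X).hom = 𝟙 X := rfl

@[simp]
theorem Aut.mul_hom {X : 𝒞} (f g : Aut X) : (f * g).hom = g.hom ≫ f.hom := rfl

variable [MonoidalCategory 𝒞]

def tensorAutHom (X Y : 𝒞) : Aut X × Aut Y →* Aut (X ⊗ Y) where
  toFun f := f.1 ⊗ᵢ f.2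
  map_one' := by ext; exact id_tensorHom_id X Y
  map_mul' f g := by ext; exact (tensorHom_comp_tensorHom _ _ _ _).symm

@[simp]
theorem tensorAutHom_apply_hom {X Y : 𝒞} (f : Aut X × Aut Y) :
    (tensorAutHom X Y f).hom = f.1.hom ⊗ₘ f.2.hom := rfl

notation:70 f:71 " ⊗ₐ " g:70 => tensorAutHom _ _ (f, g)

theorem tensorAutHom_commutatorElement {X Y : 𝒞} (f f' : Aut X) (g g' : Aut Y) :
    ⁅f ⊗ₐ g, f' ⊗ₐ g'⁆ = ⁅f, f'⁆ ⊗ₐ ⁅g, g'⁆ :=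
  (map_commutatorElement _ _ _).symm

variable [BraidedCategory 𝒞] {X : 𝒞}

def swapLeftAut (X : 𝒞) : Aut ((X ⊗ X) ⊗ X) := β_ X X ⊗ₐ 1

def cycleAut (X : 𝒞) : Aut ((X ⊗ X) ⊗ X) := α_ X X X ≪≫ β_ X (X ⊗ X)

theorem swapLeftAut_mul (f g h : Aut X) :
    swapLeftAut X * ((f ⊗ₐ g) ⊗ₐ h) = ((g ⊗ₐ f) ⊗ₐ h) * swapLeftAut X := by
  ext
  simp only [swapLeftAut, Aut.mul_hom, tensorAutHom_apply_hom, Aut.one_hom]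
  rw [tensorHom_comp_tensorHom, tensorHom_comp_tensorHom, BraidedCategory.braiding_naturality,
    Category.comp_id, Category.id_comp]

theorem cycleAut_mul (f g h : Aut X) :
    cycleAut X * ((f ⊗ₐ g) ⊗ₐ h) = ((g ⊗ₐ h) ⊗ₐ f) * cycleAut X := by
  ext
  change _ ≫ (α_ X X X).hom ≫ (β_ X (X ⊗ X)).hom = ((α_ X X X).hom ≫ (β_ X (X ⊗ X)).hom) ≫ _
  simp only [tensorAutHom_apply_hom]
  rw [associator_naturality_assoc, BraidedCategory.braiding_naturality, Category.assoc]

theorem commutatorElement_tensorAutHom_swapLeftAut (f : Aut X) :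
    ⁅(f ⊗ₐ (1 : Aut X)) ⊗ₐ (1 : Aut X), swapLeftAut X⁆ = (f ⊗ₐ f⁻¹) ⊗ₐ (1 : Aut X) := by
  rw [commutatorElement_eq_mul_inv_of_mul_eq (swapLeftAut_mul f 1 1)]
  simp [← map_inv, ← map_mul]

theorem commutatorElement_tensorAutHom_cycleAut (f : Aut X) :
    ⁅(f ⊗ₐ (1 : Aut X)) ⊗ₐ (1 : Aut X), cycleAut X⁆ = (f ⊗ₐ 1) ⊗ₐ f⁻¹ := by
  rw [commutatorElement_eq_mul_inv_of_mul_eq (cycleAut_mul f 1 1)]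
  simp [← map_inv, ← map_mul]

end

/-- **Stably, commutators are commutators of commutators**: in a symmetric monoidal
category, for `u, v : X ≅ X` there are automorphisms `a, b` of `(X ⊗ X) ⊗ X`, each of
which is itself a commutator, with `(⁅u,v⁆ ⊗ 𝟙) ⊗ 𝟙 = ⁅a, b⁆`. -/
theorem commutator_of_commutators {𝒞 : Type*} [Category 𝒞] [MonoidalCategory 𝒞]
    [SymmetricCategory 𝒞] (X : 𝒞) (u v : Aut X) :
    ∃ a b : Aut ((X ⊗ X) ⊗ X),
      (∃ c d : Aut ((X ⊗ X) ⊗ X), a = ⁅c, d⁆) ∧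
      (∃ c d : Aut ((X ⊗ X) ⊗ X), b = ⁅c, d⁆) ∧
      (((⁅u, v⁆ : Aut X) ⊗ᵢ Iso.refl X) ⊗ᵢ Iso.refl X : Aut ((X ⊗ X) ⊗ X)) = ⁅a, b⁆ := by
  refine ⟨(u ⊗ₐ u⁻¹) ⊗ₐ (1 : Aut X), (v ⊗ₐ (1 : Aut X)) ⊗ₐ v⁻¹,
    ⟨_, _, (commutatorElement_tensorAutHom_swapLeftAut u).symm⟩,
    ⟨_, _, (commutatorElement_tensorAutHom_cycleAut v).symm⟩, ?_⟩
  rw [tensorAutHom_commutatorElement, tensorAutHom_commutatorElement, commutatorElement_one_right,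
    commutatorElement_one_left]
  rfl
end

section
/- Explicit rank-change isomorphism (equation (2to1_F)): let C be a Cantor algebra that is free on the single generator c. Then C is also free on the two generators λ(c) and ρ(c), where (λ(c), ρ(c)) = μ⁻¹(c) are the two components of the inverse of μ applied to c. -/
open CategoryTheory


/-- A Cantor algebra: a type with a bijection `μ : X × X ≃ X`. -/
structure CantorStr (X : Type) where
  mu : X × X ≃ X

/-- A homomorphism of Cantor algebras: a map commuting with the multiplications. -/
def IsCantorHom {C X : Type} (hC : CantorStr C) (hX : CantorStr X) (f : C → X) : Prop :=
  ∀ x y : C, f (hC.mu (x, y)) = hX.mu (f x, f y)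

/-- `C` is the free Cantor algebra on the generators `b : Fin r → C`. -/
def IsFreeCantorOn {C : Type} (hC : CantorStr C) {r : ℕ} (b : Fin r → C) : Prop :=
  ∀ (X : Type) (hX : CantorStr X) (x : Fin r → X),
    ∃! f : C → X, IsCantorHom hC hX f ∧ ∀ i, f (b i) = x i

/-
A homomorphism out of `C` is determined on `c = μ(λ c, ρ c)` exactly by its values on `λ c`
and `ρ c`, because `μ` is injective on the target. So prescribing `f c = μ(x₀, x₁)` is the
same condition on a homomorphism as prescribing `f (λ c) = x₀` and `f (ρ c) = x₁`, and the
unique extension for the first problem is the unique extension for the second.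
-/

theorem IsCantorHom.apply_eq {C X : Type} {hC : CantorStr C} {hX : CantorStr X} {f : C → X}
    (hf : IsCantorHom hC hX f) (c : C) :
    f c = hX.mu (f (hC.mu.symm c).1, f (hC.mu.symm c).2) := by
  conv_lhs => rw [← hC.mu.apply_symm_apply c]
  exact hf _ _

theorem IsCantorHom.apply_eq_mu_iff {C X : Type} {hC : CantorStr C} {hX : CantorStr X}
    {f : C → X} (hf : IsCantorHom hC hX f) (c : C) (y z : X) :
    f c = hX.mu (y, z) ↔ f (hC.mu.symm c).1 = y ∧ f (hC.mu.symm c).2 = z := by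
  rw [hf.apply_eq, hX.mu.apply_eq_iff_eq, Prod.ext_iff]

/-- **Explicit rank-change isomorphism**: if `C` is free on the single generator `c`,
then `C` is also free on the two generators `λ(c)` and `ρ(c)`, the components of
`μ⁻¹(c)`. -/
theorem free_on_two_generators {C : Type} (hC : CantorStr C) (c : C)
    (hfree : IsFreeCantorOn hC ![c]) :
    IsFreeCantorOn hC ![(hC.mu.symm c).1, (hC.mu.symm c).2] := by
  intro X hX x
  refine (existsUnique_congr fun f => and_congr_right fun hf => ?_).mp
    (hfree X hX ![hX.mu (x 0, x 1)])
  simpa [Fin.forall_fin_one, Fin.forall_fin_two] using hf.apply_eq_mu_iff c (x 0) (x 1)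
end

section
/- All finitely generated free Cantor algebras of positive rank are isomorphic (equation (F_iso)): if r ≥ 1 and s ≥ 1, if C is a Cantor algebra free on r generators and D is a Cantor algebra free on s generators, then there exists an isomorphism of Cantor algebras C ≅ D, i.e. a bijection f : C ≃ D with f(μ(x,y)) = μ(f x, f y) for all x, y. -/
open CategoryTheory


/-!
Splitting the last generator `b` of a free basis into the two components of `μ⁻¹ b` gives a free
basis with one more element, since a homomorphism is determined on `b` by its values on these
components. Hence a Cantor algebra free of rank `r ≥ 1` is free of every rank `n ≥ r`, and two
Cantor algebras free on the same number of generators are isomorphic by the universal property.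
-/

theorem IsCantorHom.id {C : Type} {hC : CantorStr C} : IsCantorHom hC hC id :=
  fun _ _ => rfl

namespace IsCantorHom

variable {C X Y : Type} {hC : CantorStr C} {hX : CantorStr X} {hY : CantorStr Y}

theorem comp {f : C → X} {g : X → Y} (hg : IsCantorHom hX hY g) (hf : IsCantorHom hC hX f) :
    IsCantorHom hC hY (g ∘ f) := fun x y => by
  rw [Function.comp_apply, hf x y, hg]; rfl

theorem apply_eq_mu_iff_s8 {f : C → X} (hf : IsCantorHom hC hX f) (a : C) (u v : X) :
    f a = hX.mu (u, v) ↔ f (hC.mu.symm a).1 = u ∧ f (hC.mu.symm a).2 = v := by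
  rw [← hC.mu.apply_symm_apply a, hf, hX.mu.apply_eq_iff_eq, Prod.mk.injEq,
    Equiv.apply_symm_apply]

end IsCantorHom

namespace CantorStr

variable {C X : Type} {m : ℕ}

def splitLast (hC : CantorStr C) (b : Fin (m + 1) → C) : Fin (m + 2) → C :=
  Fin.snoc (Fin.snoc (Fin.init b) (hC.mu.symm (b (Fin.last m))).1) (hC.mu.symm (b (Fin.last m))).2

def joinLast (hX : CantorStr X) (x : Fin (m + 2) → X) : Fin (m + 1) → X :=
  Fin.snoc (Fin.init (Fin.init x)) (hX.mu (x (Fin.last m).castSucc, x (Fin.last (m + 1))))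

theorem forall_apply_splitLast_eq_iff {hC : CantorStr C} {hX : CantorStr X} {f : C → X}
    (hf : IsCantorHom hC hX f) (b : Fin (m + 1) → C) (x : Fin (m + 2) → X) :
    (∀ i, f (hC.splitLast b i) = x i) ↔ ∀ i, f (b i) = hX.joinLast x i := by
  simp only [Fin.forall_fin_succ', splitLast, joinLast, Fin.snoc_castSucc, Fin.snoc_last,
    Fin.init, hf.apply_eq_mu_iff_s8, and_assoc]

end CantorStr

namespace IsFreeCantorOn

variable {C : Type} {hC : CantorStr C}

theorem hom_ext {r : ℕ} {b : Fin r → C} (hb : IsFreeCantorOn hC b) {X : Type}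
    {hX : CantorStr X} {f g : C → X} (hf : IsCantorHom hC hX f) (hg : IsCantorHom hC hX g)
    (h : ∀ i, f (b i) = g (b i)) : f = g :=
  (hb X hX (g ∘ b)).unique ⟨hf, h⟩ ⟨hg, fun _ => rfl⟩

theorem splitLast {m : ℕ} {b : Fin (m + 1) → C} (hb : IsFreeCantorOn hC b) :
    IsFreeCantorOn hC (hC.splitLast b) := fun X hX x => by
  obtain ⟨f, ⟨hf, hfb⟩, huniq⟩ := hb X hX (hX.joinLast x)
  exact ⟨f, ⟨hf, (CantorStr.forall_apply_splitLast_eq_iff hf b x).2 hfb⟩,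
    fun g ⟨hg, hgx⟩ => huniq g ⟨hg, (CantorStr.forall_apply_splitLast_eq_iff hg b x).1 hgx⟩⟩

theorem exists_of_le {r n : ℕ} (hr : 1 ≤ r) (hrn : r ≤ n) {b : Fin r → C}
    (hb : IsFreeCantorOn hC b) : ∃ c : Fin n → C, IsFreeCantorOn hC c := by
  induction n, hrn using Nat.le_induction with
  | base => exact ⟨b, hb⟩
  | succ n hrn ih =>
    obtain ⟨m, rfl⟩ : ∃ m, n = m + 1 := ⟨n - 1, by omega⟩
    obtain ⟨c, hc⟩ := ih
    exact ⟨_, hc.splitLast⟩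

theorem exists_equiv {D : Type} {hD : CantorStr D} {n : ℕ} {b : Fin n → C} {b' : Fin n → D}
    (hb : IsFreeCantorOn hC b) (hb' : IsFreeCantorOn hD b') :
    ∃ e : C ≃ D, IsCantorHom hC hD e := by
  obtain ⟨f, ⟨hf, hfb⟩, -⟩ := hb D hD b'
  obtain ⟨g, ⟨hg, hgb⟩, -⟩ := hb' C hC b
  have hgf : g ∘ f = id := hb.hom_ext (hg.comp hf) IsCantorHom.id (by simp [hfb, hgb])
  have hfg : f ∘ g = id := hb'.hom_ext (hf.comp hg) IsCantorHom.id (by simp [hfb, hgb])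
  exact ⟨⟨f, g, congrFun hgf, congrFun hfg⟩, hf⟩

end IsFreeCantorOn

/-- **All finitely generated free Cantor algebras of positive rank are isomorphic**. -/
theorem free_cantor_iso {C D : Type} (hC : CantorStr C) (hD : CantorStr D) {r s : ℕ}
    (hr : 1 ≤ r) (hs : 1 ≤ s) (b : Fin r → C) (hb : IsFreeCantorOn hC b)
    (b' : Fin s → D) (hb' : IsFreeCantorOn hD b') :
    ∃ f : C ≃ D, ∀ x y : C, f (hC.mu (x, y)) = hD.mu (f x, f y) := by
  obtain ⟨c, hc⟩ := hb.exists_of_le hr (le_max_left r s)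
  obtain ⟨d, hd⟩ := hb'.exists_of_le hs (le_max_right r s)
  exact hc.exists_equiv hd
end

section
/- Finite families of clones can be refined to pairwise disjoint clones (proof of Proposition 5.4): let C be a Cantor algebra free on one generator and let X₁,…,X_k be finitely many clones of C. Then there exist clones X'₁,…,X'_k of C with X'_j ⊆ X_j for all j, such that the X'_j are pairwise disjoint (X'_i ∩ X'_j = ∅ for i ≠ j) and moreover the subalgebra generated by X'₁ ∪ ⋯ ∪ X'_k is a proper subset of C. -/
open CategoryTheory


/-- A subalgebra: a subset closed under `μ`, `λ` and `ρ`. -/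
def IsCantorSubalgebra {C : Type} (hC : CantorStr C) (S : Set C) : Prop :=
  (∀ x ∈ S, ∀ y ∈ S, hC.mu (x, y) ∈ S) ∧
    ∀ x ∈ S, (hC.mu.symm x).1 ∈ S ∧ (hC.mu.symm x).2 ∈ S

/-- The subalgebra generated by a subset: the smallest subalgebra containing it. -/
def genCantorSubalgebra {C : Type} (hC : CantorStr C) (A : Set C) : Set C :=
  ⋂₀ {S : Set C | IsCantorSubalgebra hC S ∧ A ⊆ S}

/-- A clone: a nonempty, proper, finitely generated subalgebra. -/
def IsClone {C : Type} (hC : CantorStr C) (X : Set C) : Prop :=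
  IsCantorSubalgebra hC X ∧ X.Nonempty ∧ X ≠ Set.univ ∧
    ∃ F : Set C, F.Finite ∧ X = genCantorSubalgebra hC F

/-!
Map the free algebra `C` to the Cantor algebra of self-maps of Cantor space `Stream' Bool`,
sending the generator to `id`. The maps that, below every cylinder, restrict on a smaller
cylinder to a prefix replacement `V ++ s ↦ P ++ s` form a subalgebra containing `id`, so they
contain the whole image. Hence descending from any point of the clone `X j` (applying `λ`, `ρ`
along a word) reaches an element `z j` mapped to `s ↦ W j ++ s`, and by descending further the
words `W j` can be made to have pairwise disjoint cylinders whose union misses some sequence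
`s₀`. Maps with range in a fixed set form a subalgebra, so everything generated by `z j` maps
into the cylinder of `W j` (disjointness), and everything generated by all the `z j` maps into
the union of the cylinders, which `id`, the image of `c`, does not.
-/

namespace CantorStr

variable {X : Type} (hX : CantorStr X)

def child (b : Bool) (x : X) : X := bif b then (hX.mu.symm x).2 else (hX.mu.symm x).1

def descend (l : List Bool) (x : X) : X := l.foldl (fun y b => hX.child b y) x

@[simp] lemma descend_cons (b : Bool) (l : List Bool) (x : X) :
    hX.descend (b :: l) x = hX.descend l (hX.child b x) := rfl

lemma descend_append (l₁ l₂ : List Bool) (x : X) :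
    hX.descend (l₁ ++ l₂) x = hX.descend l₂ (hX.descend l₁ x) :=
  List.foldl_append

end CantorStr

section

variable {C X : Type} {hC : CantorStr C} {hX : CantorStr X}

lemma IsCantorHom.map_symm {f : C → X} (hf : IsCantorHom hC hX f) (x : C) :
    hX.mu.symm (f x) = Prod.map f f (hC.mu.symm x) := by
  conv_lhs => rw [← hC.mu.apply_symm_apply x, hf, Equiv.symm_apply_apply]
  rfl

lemma IsCantorHom.map_child {f : C → X} (hf : IsCantorHom hC hX f) (b : Bool) (x : C) :
    f (hC.child b x) = hX.child b (f x) := by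
  cases b <;> simp [CantorStr.child, hf.map_symm]

lemma IsCantorHom.map_descend {f : C → X} (hf : IsCantorHom hC hX f) (l : List Bool) (x : C) :
    f (hC.descend l x) = hX.descend l (f x) := by
  induction l generalizing x with
  | nil => rfl
  | cons b l ih => simp [ih, hf.map_child]

lemma IsCantorSubalgebra.child_mem {S : Set C} (hS : IsCantorSubalgebra hC S) (b : Bool)
    {x : C} (hx : x ∈ S) : hC.child b x ∈ S := by
  cases b
  exacts [(hS.2 x hx).1, (hS.2 x hx).2]

lemma IsCantorSubalgebra.descend_mem {S : Set C} (hS : IsCantorSubalgebra hC S)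
    (l : List Bool) {x : C} (hx : x ∈ S) : hC.descend l x ∈ S := by
  induction l generalizing x with
  | nil => exact hx
  | cons b l ih => exact ih (hS.child_mem b hx)

lemma IsCantorSubalgebra.preimage {S : Set X} (hS : IsCantorSubalgebra hX S) {f : C → X}
    (hf : IsCantorHom hC hX f) : IsCantorSubalgebra hC (f ⁻¹' S) := by
  refine ⟨fun x hx y hy => ?_, fun x hx => ?_⟩
  · simpa only [Set.mem_preimage, hf x y] using hS.1 _ hx _ hy
  · simpa only [Set.mem_preimage, hf.map_symm, Prod.map_fst, Prod.map_snd] using hS.2 _ hx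

lemma isCantorSubalgebra_genCantorSubalgebra (A : Set C) :
    IsCantorSubalgebra hC (genCantorSubalgebra hC A) :=
  ⟨fun x hx y hy S hS => hS.1.1 x (hx S hS) y (hy S hS),
    fun x hx => ⟨fun S hS => (hS.1.2 x (hx S hS)).1, fun S hS => (hS.1.2 x (hx S hS)).2⟩⟩

lemma subset_genCantorSubalgebra (A : Set C) : A ⊆ genCantorSubalgebra hC A :=
  fun _ hx _ hS => hS.2 hx

lemma genCantorSubalgebra_subset {A S : Set C} (hS : IsCantorSubalgebra hC S) (hA : A ⊆ S) :
    genCantorSubalgebra hC A ⊆ S :=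
  fun _ hx => hx S ⟨hS, hA⟩

def IsCantorSubalgebra.cantorStr {S : Set C} (hS : IsCantorSubalgebra hC S) : CantorStr S where
  mu :=
    { toFun := fun p => ⟨hC.mu (p.1, p.2), hS.1 _ p.1.2 _ p.2.2⟩
      invFun := fun x => (⟨_, (hS.2 x x.2).1⟩, ⟨_, (hS.2 x x.2).2⟩)
      left_inv := fun p => by ext <;> simp
      right_inv := fun x => by ext; simp }

lemma IsFreeCantorOn.mem_of_isCantorSubalgebra {r : ℕ} {b : Fin r → C}
    (hfree : IsFreeCantorOn hC b) {S : Set C} (hS : IsCantorSubalgebra hC S)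
    (hb : ∀ i, b i ∈ S) (x : C) : x ∈ S := by
  obtain ⟨g, ⟨hg, hgb⟩, -⟩ := hfree S hS.cantorStr fun i => ⟨b i, hb i⟩
  obtain ⟨f, -, huniq⟩ := hfree C hC b
  have hval_g : IsCantorHom hC hC (fun y => (g y : C)) := fun y z => by
    change ((g _ : S) : C) = _
    rw [hg]
    rfl
  have : (fun y => (g y : C)) = id :=
    (huniq _ ⟨hval_g, fun i => by simp [hgb]⟩).trans (huniq id ⟨fun _ _ => rfl, fun _ => rfl⟩).symm
  simpa only [congrFun this x, id_eq] using (g x).2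

lemma IsClone.genCantorSubalgebra_singleton {X : Set C} (hX : IsClone hC X) {z : C}
    (hz : z ∈ X) : IsClone hC (genCantorSubalgebra hC {z}) ∧ genCantorSubalgebra hC {z} ⊆ X := by
  have hsub := genCantorSubalgebra_subset hX.1 (Set.singleton_subset_iff.2 hz)
  refine ⟨⟨isCantorSubalgebra_genCantorSubalgebra _, ⟨z, subset_genCantorSubalgebra _ rfl⟩,
    fun h => hX.2.2.1 (Set.eq_univ_of_univ_subset (h ▸ hsub)), {z}, Set.finite_singleton z, rfl⟩,
    hsub⟩

end

open Stream' in
/-- `μ (h₁, h₂) (false :: s) = h₁ s` and `μ (h₁, h₂) (true :: s) = h₂ s`. -/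
def CantorStr.streamFun (Y : Type) : CantorStr (Stream' Bool → Y) where
  mu :=
    { toFun := fun p s => bif s.head then p.2 s.tail else p.1 s.tail
      invFun := fun h => (fun s => h (false :: s), fun s => h (true :: s))
      left_inv := fun _ => rfl
      right_inv := fun h => by
        funext s
        change (bif s.head then h (true :: s.tail) else h (false :: s.tail)) = h s
        rw [← Stream'.eta s]
        cases s.head <;> rfl }

section

variable {Y : Type}

lemma CantorStr.streamFun_child (b : Bool) (h : Stream' Bool → Y) :
    (CantorStr.streamFun Y).child b h = fun s => h (Stream'.cons b s) := by
  cases b <;> rfl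

lemma CantorStr.streamFun_descend (l : List Bool) (h : Stream' Bool → Y) :
    (CantorStr.streamFun Y).descend l h = fun s => h (l ++ₛ s) := by
  induction l generalizing h with
  | nil => rfl
  | cons b l ih => simp only [CantorStr.descend_cons, ih, CantorStr.streamFun_child]; rfl

lemma isCantorSubalgebra_streamFun_setOf_forall_mem (A : Set Y) :
    IsCantorSubalgebra (CantorStr.streamFun Y) {h | ∀ s, h s ∈ A} := by
  refine ⟨fun h₁ h₁A h₂ h₂A s => ?_, fun h hA => ⟨fun s => hA _, fun s => hA _⟩⟩
  change (bif s.head then h₂ s.tail else h₁ s.tail) ∈ A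
  cases s.head
  exacts [h₁A _, h₂A _]

end

def denselyPrefixReplacing : Set (Stream' Bool → Stream' Bool) :=
  {h | ∀ V, ∃ V' P : List Bool, ∀ s, h (V ++ₛ (V' ++ₛ s)) = P ++ₛ s}

lemma id_mem_denselyPrefixReplacing : id ∈ denselyPrefixReplacing :=
  fun V => ⟨[], V, fun _ => rfl⟩

lemma isCantorSubalgebra_denselyPrefixReplacing :
    IsCantorSubalgebra (CantorStr.streamFun _) denselyPrefixReplacing := by
  refine ⟨fun h₁ h₁D h₂ h₂D V => ?_, fun h hD => ⟨fun V => ?_, fun V => ?_⟩⟩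
  · rcases V with _ | ⟨b, V⟩
    · obtain ⟨V', P, hP⟩ := h₁D []
      exact ⟨false :: V', P, hP⟩
    · cases b
      exacts [h₁D V, h₂D V]
  · exact hD (false :: V)
  · exact hD (true :: V)

lemma exists_append_pairwise_disjoint_cylinders {k : ℕ} (P : Fin k → List Bool) :
    ∃ R : Fin k → List Bool,
      (∀ i j, i ≠ j → ∀ s t, (P i ++ R i) ++ₛ s ≠ (P j ++ R j) ++ₛ t) ∧
      ∃ s₀, ∀ j t, (P j ++ R j) ++ₛ t ≠ s₀ := by
  obtain ⟨M, hM⟩ : ∃ M, ∀ j, (P j).length ≤ M :=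
    ⟨Finset.univ.sup fun j => (P j).length,
      fun j => Finset.le_sup (f := fun j => (P j).length) (Finset.mem_univ j)⟩
  -- pad every `P j` to length `M`, then write the indicator of `j` on positions `M, …, M + k - 1`
  let R j := List.replicate (M - (P j).length) false ++ List.ofFn fun i : Fin k => decide (i = j)
  have hget : ∀ (i j : Fin k) t, ((P j ++ R j) ++ₛ t).get (M + i) = decide (i = j) := by
    intro i j t
    have hlen : (P j ++ List.replicate (M - (P j).length) false).length = M := by
      simp only [List.length_append, List.length_replicate]; have := hM j; omega
    rw [← List.append_assoc, Stream'.append_append_stream, ← congrArg (· + (i : ℕ)) hlen,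
      Stream'.get_append_right, Stream'.get_append_left _ _ _ (by simp), List.getElem_ofFn]
  refine ⟨R, fun i j hij s t he => hij ?_, Stream'.const false, fun j t he => ?_⟩
  · have := congrArg (Stream'.get · (M + i)) he
    simp only [hget] at this
    simpa using this
  · have := congrArg (Stream'.get · (M + j)) he
    simp only [hget] at this
    simp at this

lemma exists_descend_eq_append {C : Type} {hC : CantorStr C} {r : ℕ} {b : Fin r → C}
    (hfree : IsFreeCantorOn hC b) {f : C → Stream' Bool → Stream' Bool}
    (hf : IsCantorHom hC (CantorStr.streamFun _) f) (hb : ∀ i, f (b i) = id) (x : C) :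
    ∃ V P : List Bool, f (hC.descend V x) = (P ++ₛ ·) := by
  have hx : f x ∈ denselyPrefixReplacing :=
    hfree.mem_of_isCantorSubalgebra (isCantorSubalgebra_denselyPrefixReplacing.preimage hf)
      (fun i => by simp only [Set.mem_preimage, hb, id_mem_denselyPrefixReplacing]) x
  obtain ⟨V, P, hP⟩ := hx []
  exact ⟨V, P, by rw [hf.map_descend, CantorStr.streamFun_descend]; exact funext hP⟩

/-- **Finite families of clones can be refined to pairwise disjoint clones** whose union
generates a proper subalgebra. -/
theorem refine_clones_disjoint {C : Type} (hC : CantorStr C) (c : C)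
    (hfree : IsFreeCantorOn hC ![c]) (k : ℕ) (X : Fin k → Set C)
    (hX : ∀ j, IsClone hC (X j)) :
    ∃ X' : Fin k → Set C, (∀ j, IsClone hC (X' j)) ∧ (∀ j, X' j ⊆ X j) ∧
      (∀ i j, i ≠ j → X' i ∩ X' j = ∅) ∧
      genCantorSubalgebra hC (⋃ j, X' j) ≠ Set.univ := by
  obtain ⟨f, ⟨hf, hfc⟩, -⟩ := hfree _ (CantorStr.streamFun _) ![id]
  choose x hx using fun j => (hX j).2.1
  choose V P hVP using fun j => exists_descend_eq_append hfree hf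
    (fun i => (hfc i).trans (Matrix.cons_val_fin_one _ _ i)) (x j)
  obtain ⟨R, hdisj, s₀, hs₀⟩ := exists_append_pairwise_disjoint_cylinders P
  let z j := hC.descend (V j ++ R j) (x j)
  have hzX j : z j ∈ X j := (hX j).1.descend_mem _ (hx j)
  have hfz j : f (z j) = ((P j ++ R j) ++ₛ ·) := by
    rw [show z j = _ from hC.descend_append _ _ _, hf.map_descend, hVP,
      CantorStr.streamFun_descend]
    simp
  let cylMaps (A : Set (Stream' Bool)) := f ⁻¹' {h | ∀ s, h s ∈ A}
  have hcylMaps A : IsCantorSubalgebra hC (cylMaps A) :=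
    (isCantorSubalgebra_streamFun_setOf_forall_mem A).preimage hf
  have hz_cyl j : genCantorSubalgebra hC {z j} ⊆ cylMaps (Set.range ((P j ++ R j) ++ₛ ·)) :=
    genCantorSubalgebra_subset (hcylMaps _) (by simp [cylMaps, hfz])
  refine ⟨fun j => genCantorSubalgebra hC {z j},
    fun j => ((hX j).genCantorSubalgebra_singleton (hzX j)).1,
    fun j => ((hX j).genCantorSubalgebra_singleton (hzX j)).2, fun i j hij => ?_, fun huniv => ?_⟩
  · refine Set.eq_empty_of_forall_notMem fun w ⟨hwi, hwj⟩ => ?_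
    obtain ⟨s, hs⟩ := hz_cyl i hwi s₀
    obtain ⟨t, ht⟩ := hz_cyl j hwj s₀
    exact hdisj i j hij s t (hs.trans ht.symm)
  · have hc : c ∈ cylMaps (⋃ j, Set.range ((P j ++ R j) ++ₛ ·)) :=
      genCantorSubalgebra_subset (hcylMaps _)
        (Set.iUnion_subset fun j => (hz_cyl j).trans fun w hw s => Set.mem_iUnion_of_mem j (hw s))
        (huniv ▸ Set.mem_univ c)
    obtain ⟨j, t, ht⟩ := Set.mem_iUnion.1 (hc s₀)
    exact hs₀ j t (ht.trans (congrFun (hfc 0) s₀))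
end
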